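/- arXiv:1511.06005 — 2 statements merged into one kernel-verified Lean document; each statement's English description precedes it below -/
import Mathlib

section
/- The power series ∑_{n≥0} z^{2ⁿ} has radius of convergence 1 and its sum f(z) does not extend holomorphically past any point of the unit circle: for every z₀ with |z₀| = 1 and every open neighborhood U of z₀, there is no holomorphic g on U agreeing with f on U ∩ {|z| < 1}. -/
/-!
If `ζ ^ 2 ^ m = 1`, then `(r ζ) ^ 2 ^ n = r ^ 2 ^ n` for `n ≥ m`, so along the radius to `ζ` the
sum is, up to `m` terms of norm at most `1`, the positive series `∑ r ^ 2 ^ n`, which tends to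
`+∞` as `r → 1⁻`. The roots of unity of order a power of two are dense in the unit circle, so
every open `U` meeting the circle contains one; a `g` holomorphic on `U` is continuous, hence
bounded, near it, which is incompatible with `g = f` on `U ∩ ball 0 1`.
-/

open Metric Set Filter Topology Complex
open scoped Real

theorem summable_pow_two_pow {R : Type*} [NormedRing R] [CompleteSpace R] {z : R}
    (hz : ‖z‖ < 1) : Summable fun n : ℕ => z ^ 2 ^ n := by
  refine .of_norm_bounded (summable_geometric_of_lt_one (norm_nonneg z) hz) fun n => ?_
  calc ‖z ^ 2 ^ n‖ ≤ ‖z‖ ^ 2 ^ n := norm_pow_le' z (Nat.two_pow_pos n)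
    _ ≤ ‖z‖ ^ n := pow_le_pow_of_le_one (norm_nonneg z) hz.le Nat.lt_two_pow_self.le

theorem not_summable_pow_two_pow {R : Type*} [NormedDivisionRing R] {z : R}
    (hz : 1 < ‖z‖) : ¬ Summable fun n : ℕ => z ^ 2 ^ n := by
  intro h
  have hlim := h.tendsto_atTop_zero.norm
  rw [norm_zero] at hlim
  have hge : ∀ n : ℕ, 1 ≤ ‖z ^ 2 ^ n‖ := fun n => by
    rw [norm_pow]
    exact one_le_pow₀ hz.le
  linarith [ge_of_tendsto' hlim hge]

theorem dense_dyadic : Dense {x : ℝ | ∃ k : ℤ, ∃ m : ℕ, x = k / 2 ^ m} := by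
  refine dense_of_exists_between fun a b hab => ?_
  obtain ⟨m, hm⟩ := pow_unbounded_of_one_lt (b - a)⁻¹ one_lt_two
  obtain ⟨k, hk⟩ := exists_div_btwn hab (n := 2 ^ m) (by exact_mod_cast hm)
  exact ⟨k / 2 ^ m, ⟨k, m, rfl⟩, by exact_mod_cast hk⟩

theorem exists_pow_two_pow_eq_one_mem {U : Set ℂ} (hU : IsOpen U) {z₀ : ℂ} (hz₀ : ‖z₀‖ = 1)
    (hz₀U : z₀ ∈ U) : ∃ ζ ∈ U, ∃ m : ℕ, ζ ^ 2 ^ m = 1 := by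
  set φ : ℝ → ℂ := fun t => exp (2 * π * t * I)
  have hφ : Continuous φ := by fun_prop
  have hφz₀ : φ (arg z₀ / (2 * π)) = z₀ := by
    have := norm_mul_exp_arg_mul_I z₀
    rw [hz₀, ofReal_one, one_mul] at this
    convert this using 3
    push_cast
    field_simp
  obtain ⟨t, ⟨k, m, rfl⟩, ht⟩ :=
    dense_dyadic.exists_mem_open (hU.preimage hφ) ⟨_, show φ _ ∈ U from hφz₀ ▸ hz₀U⟩
  refine ⟨φ (k / 2 ^ m), ht, m, ?_⟩
  rw [← exp_nat_mul, ← exp_int_mul_two_pi_mul_I k]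
  congr 1
  push_cast
  field_simp

theorem tendsto_tsum_pow_nhdsLT_one_atTop {a : ℕ → ℕ}
    (ha : ∀ r ∈ Ioo (0 : ℝ) 1, Summable fun n => r ^ a n) :
    Tendsto (fun r : ℝ => ∑' n, r ^ a n) (𝓝[<] 1) atTop := by
  refine tendsto_atTop.2 fun b => ?_
  obtain ⟨N, hN⟩ := exists_nat_gt b
  have hpartial : Tendsto (fun r : ℝ => ∑ n ∈ Finset.range N, r ^ a n) (𝓝[<] 1) (𝓝 N) := by
    have : Continuous fun r : ℝ => ∑ n ∈ Finset.range N, r ^ a n := by fun_prop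
    simpa using this.continuousWithinAt.tendsto (x := 1) (s := Iio 1)
  filter_upwards [hpartial.eventually_const_lt hN, Ioo_mem_nhdsLT (zero_lt_one' ℝ)]
    with r hbr hr
  exact hbr.le.trans ((ha r hr).sum_le_tsum _ fun n _ => pow_nonneg hr.1.le _)

theorem tsum_ofReal_mul_pow_two_pow {ζ : ℂ} {m : ℕ} (hζ : ζ ^ 2 ^ m = 1) {r : ℝ} (hr : |r| < 1) :
    ∑' n, ((r : ℂ) * ζ) ^ 2 ^ n =
      ∑ n ∈ Finset.range m, ((r : ℂ) * ζ) ^ 2 ^ n + ↑(∑' n, r ^ 2 ^ (n + m)) := by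
  have hζ1 : ‖ζ‖ = 1 := norm_eq_one_of_pow_eq_one hζ (by positivity)
  have hsum : Summable fun n : ℕ => ((r : ℂ) * ζ) ^ 2 ^ n :=
    summable_pow_two_pow (by rwa [norm_mul, hζ1, mul_one, norm_real, Real.norm_eq_abs])
  rw [← hsum.sum_add_tsum_nat_add m, ofReal_tsum]
  congr 2 with n
  rw [mul_pow, pow_add, pow_mul' ζ, hζ, one_pow, mul_one, ofReal_pow]

theorem sub_le_norm_tsum_ofReal_mul_pow_two_pow {ζ : ℂ} {m : ℕ} (hζ : ζ ^ 2 ^ m = 1) {r : ℝ}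
    (hr : r ∈ Ioo 0 1) : ∑' n, r ^ 2 ^ (n + m) - m ≤ ‖∑' n, ((r : ℂ) * ζ) ^ 2 ^ n‖ := by
  have hnorm : ‖(r : ℂ) * ζ‖ = r := by
    rw [norm_mul, norm_eq_one_of_pow_eq_one hζ (by positivity), mul_one, norm_real,
      Real.norm_of_nonneg hr.1.le]
  have hhead : ‖∑ n ∈ Finset.range m, ((r : ℂ) * ζ) ^ 2 ^ n‖ ≤ m := by
    calc ‖∑ n ∈ Finset.range m, ((r : ℂ) * ζ) ^ 2 ^ n‖
        ≤ ∑ n ∈ Finset.range m, ‖((r : ℂ) * ζ) ^ 2 ^ n‖ := norm_sum_le _ _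
      _ ≤ ∑ _n ∈ Finset.range m, (1 : ℝ) := Finset.sum_le_sum fun n _ => by
          rw [norm_pow, hnorm]
          exact pow_le_one₀ hr.1.le hr.2.le
      _ = m := by simp
  have htail_nonneg : 0 ≤ ∑' n, r ^ 2 ^ (n + m) := tsum_nonneg fun n => pow_nonneg hr.1.le _
  have htriangle := norm_sub_le_norm_add ((∑' n, r ^ 2 ^ (n + m) : ℝ) : ℂ)
    (∑ n ∈ Finset.range m, ((r : ℂ) * ζ) ^ 2 ^ n)
  rw [norm_real, Real.norm_of_nonneg htail_nonneg, add_comm] at htriangle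
  rw [tsum_ofReal_mul_pow_two_pow hζ (abs_lt.2 ⟨by linarith [hr.1], hr.2⟩)]
  linarith

theorem tendsto_norm_tsum_ofReal_mul_pow_two_pow {ζ : ℂ} {m : ℕ} (hζ : ζ ^ 2 ^ m = 1) :
    Tendsto (fun r : ℝ => ‖∑' n, ((r : ℂ) * ζ) ^ 2 ^ n‖) (𝓝[<] 1) atTop := by
  have htail : Tendsto (fun r : ℝ => ∑' n, r ^ 2 ^ (n + m)) (𝓝[<] 1) atTop :=
    tendsto_tsum_pow_nhdsLT_one_atTop fun r hr =>
      (summable_nat_add_iff (f := fun n => r ^ 2 ^ n) m).2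
        (summable_pow_two_pow (by rw [Real.norm_of_nonneg hr.1.le]; exact hr.2))
  refine tendsto_atTop_mono' _ ?_ (tendsto_atTop_add_const_right _ (-m : ℝ) htail)
  filter_upwards [Ioo_mem_nhdsLT (zero_lt_one' ℝ)] with r hr
  simpa only [← sub_eq_add_neg] using sub_le_norm_tsum_ofReal_mul_pow_two_pow hζ hr

theorem not_eqOn_of_tendsto_norm_atTop {X α E : Type*} [TopologicalSpace X]
    [NormedAddCommGroup E] {f g : X → E} {s : Set X} {x : X} {l : Filter α} [l.NeBot] {γ : α → X}
    (hγ : Tendsto γ l (𝓝[s] x)) (hf : Tendsto (fun a => ‖f (γ a)‖) l atTop)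
    (hg : ContinuousAt g x) : ¬ EqOn f g s := by
  intro hfg
  have hbounded : ∀ᶠ y in 𝓝[s] x, ‖f y‖ < ‖g x‖ + 1 := by
    filter_upwards [nhdsWithin_le_nhds (hg.norm.eventually_lt_const (lt_add_one _)),
      self_mem_nhdsWithin] with y hy hys
    rwa [hfg hys]
  obtain ⟨a, hlt, hgt⟩ := ((hγ.eventually hbounded).and (hf.eventually_gt_atTop _)).exists
  exact hlt.not_gt hgt

theorem tendsto_ofReal_mul_nhdsWithin_ball {ζ : ℂ} (hζ : ‖ζ‖ = 1) :
    Tendsto (fun r : ℝ => (r : ℂ) * ζ) (𝓝[<] 1) (𝓝[ball 0 1] ζ) := by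
  refine tendsto_nhdsWithin_iff.2 ⟨?_, ?_⟩
  · have : Continuous fun r : ℝ => (r : ℂ) * ζ := by fun_prop
    simpa using this.continuousWithinAt.tendsto (x := 1) (s := Iio 1)
  · filter_upwards [Ioo_mem_nhdsLT (zero_lt_one' ℝ)] with r hr
    rw [mem_ball_zero_iff, norm_mul, hζ, mul_one, norm_real, Real.norm_of_nonneg hr.1.le]
    exact hr.2

/-- The lacunary series `∑ z^(2ⁿ)` has radius of convergence 1 and the unit
circle is a natural boundary for its sum. -/
theorem lacunary_series_natural_boundary
    (f : ℂ → ℂ) (hf : ∀ z : ℂ, f z = ∑' n : ℕ, z ^ (2 ^ n)) :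
    (∀ z : ℂ, ‖z‖ < 1 → Summable (fun n : ℕ => z ^ (2 ^ n))) ∧
    (∀ z : ℂ, 1 < ‖z‖ → ¬ Summable (fun n : ℕ => z ^ (2 ^ n))) ∧
    ∀ z₀ : ℂ, ‖z₀‖ = 1 →
      ∀ U : Set ℂ, IsOpen U → z₀ ∈ U →
        ¬ ∃ g : ℂ → ℂ, DifferentiableOn ℂ g U ∧ EqOn f g (U ∩ ball 0 1) := by
  refine ⟨fun z => summable_pow_two_pow, fun z => not_summable_pow_two_pow, ?_⟩
  rintro z₀ hz₀ U hU hz₀U ⟨g, hg, hfg⟩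
  obtain ⟨ζ, hζU, m, hζ⟩ := exists_pow_two_pow_eq_one_mem hU hz₀ hz₀U
  have hf_radial : Tendsto (fun r : ℝ => ‖f (r * ζ)‖) (𝓝[<] 1) atTop := by
    simpa only [hf] using tendsto_norm_tsum_ofReal_mul_pow_two_pow hζ
  have hγ : Tendsto (fun r : ℝ => (r : ℂ) * ζ) (𝓝[<] 1) (𝓝[U ∩ ball 0 1] ζ) := by
    rw [nhdsWithin_inter_of_mem (mem_nhdsWithin_of_mem_nhds (hU.mem_nhds hζU))]
    exact tendsto_ofReal_mul_nhdsWithin_ball (norm_eq_one_of_pow_eq_one hζ (by positivity))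
  exact not_eqOn_of_tendsto_norm_atTop hγ hf_radial
    (hg.continuousOn.continuousAt (hU.mem_nhds hζU)) hfg
end

section
/- For each ν ∈ ℝ, the Bessel function of the first kind J_ν(x) = ∑_{m≥0} (−1)ᵐ / (m! · Γ(m + ν + 1)) · (x/2)^{2m+ν} satisfies the Bessel differential equation x²·J_ν''(x) + x·J_ν'(x) + (x² − ν²)·J_ν(x) = 0 for all x > 0. -/
/-!
Since `(x/2)^(2m+ν) = (x/2)^ν (x²/4)^m`, the Bessel function is `J(x) = (x/2)^ν f(x²/4)` with
`f(t) = ∑ cₘ tᵐ`, `cₘ = (-1)ᵐ / (m! Γ(m+ν+1))`. The functional equation `Γ(s+1) = s Γ(s)` gives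
`(m+1)(m+ν+1) c_{m+1} = -cₘ`; by the ratio test `f` is entire, and comparing coefficients the
recurrence says exactly that `t f'' + (ν+1) f' + f = 0`. The substitution `t = x²/4` and the factor
`(x/2)^ν` turn this equation into Bessel's.
-/

open Filter Metric Topology

noncomputable section

def EntireCoeffs (d : ℕ → ℝ) : Prop :=
  ∀ R : ℝ, 0 < R → Summable fun n => |d n| * R ^ n

def powerSeriesSum (d : ℕ → ℝ) (t : ℝ) : ℝ :=
  ∑' n, d n * t ^ n

def derivCoeffs (d : ℕ → ℝ) (n : ℕ) : ℝ :=
  (n + 1) * d (n + 1)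

namespace EntireCoeffs

variable {d : ℕ → ℝ}

theorem summable (hd : EntireCoeffs d) (t : ℝ) : Summable fun n => d n * t ^ n := by
  refine .of_norm_bounded (hd (|t| + 1) (by positivity)) fun n => ?_
  rw [norm_mul, norm_pow, Real.norm_eq_abs, Real.norm_eq_abs]
  gcongr
  linarith

theorem deriv (hd : EntireCoeffs d) : EntireCoeffs (derivCoeffs d) := by
  intro R hR
  refine .of_nonneg_of_le (fun n => by positivity) (fun n => ?_)
    (((summable_nat_add_iff 1).2 (hd (2 * R) (by positivity))).mul_right R⁻¹)
  have hn : ((n + 1 : ℕ) : ℝ) ≤ 2 ^ (n + 1) := by exact_mod_cast (Nat.lt_two_pow_self).le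
  push_cast at hn
  calc |derivCoeffs d n| * R ^ n = (n + 1) * |d (n + 1)| * R ^ n := by
        rw [derivCoeffs, abs_mul, abs_of_pos (by positivity : (0 : ℝ) < n + 1)]
    _ ≤ 2 ^ (n + 1) * |d (n + 1)| * R ^ n := by gcongr
    _ = |d (n + 1)| * (2 * R) ^ (n + 1) * R⁻¹ := by
        field_simp
        ring

theorem hasDerivAt (hd : EntireCoeffs d) (t : ℝ) :
    HasDerivAt (powerSeriesSum d) (powerSeriesSum (derivCoeffs d) t) t := by
  set R := |t| + 1
  have hR : 0 < R := by positivity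
  have hsplit : powerSeriesSum d = fun y => d 0 + ∑' n, d (n + 1) * y ^ (n + 1) := by
    funext y
    simp [powerSeriesSum, (hd.summable y).tsum_eq_zero_add]
  have hterm (n : ℕ) (y : ℝ) :
      HasDerivAt (fun z => d (n + 1) * z ^ (n + 1)) (derivCoeffs d n * y ^ n) y := by
    refine ((hasDerivAt_pow (n + 1) y).const_mul (d (n + 1))).congr_deriv ?_
    simp only [derivCoeffs, Nat.add_sub_cancel]
    push_cast
    ring
  have hbound (n : ℕ) (y : ℝ) (hy : y ∈ ball (0 : ℝ) R) :
      ‖derivCoeffs d n * y ^ n‖ ≤ |derivCoeffs d n| * R ^ n := by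
    rw [mem_ball_zero_iff] at hy
    rw [norm_mul, norm_pow, Real.norm_eq_abs]
    gcongr
  rw [hsplit]
  refine (hasDerivAt_tsum_of_isPreconnected (hd.deriv R hR) isOpen_ball
    (convex_ball 0 R).isPreconnected (fun n y _ => hterm n y) hbound (mem_ball_self hR)
    ((summable_nat_add_iff 1).2 (hd.summable 0)) ?_).const_add (d 0)
  rw [mem_ball_zero_iff, Real.norm_eq_abs]
  linarith

end EntireCoeffs

theorem entireCoeffs_of_recurrence {d : ℕ → ℝ} {b : ℝ}
    (hrec : ∀ n : ℕ, (n + 1) * (n + b) * d (n + 1) = -d n) : EntireCoeffs d := by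
  intro R hR
  refine summable_of_ratio_norm_eventually_le (r := 1 / 2) (by norm_num) ?_
  obtain ⟨N, hN⟩ := exists_nat_ge (max (2 * R) (1 - b))
  filter_upwards [eventually_ge_atTop N] with n hn
  have hnN : (N : ℝ) ≤ n := by exact_mod_cast hn
  have hbig : 2 * R ≤ (n + 1) * (n + b) := by
    nlinarith [le_max_left (2 * R) (1 - b), le_max_right (2 * R) (1 - b)]
  have hd : |d n| = (n + 1) * (n + b) * |d (n + 1)| := by
    rw [← abs_neg, ← hrec, abs_mul, abs_of_nonneg (by nlinarith)]
  simp only [norm_mul, norm_pow, Real.norm_eq_abs, abs_abs, abs_of_pos hR]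
  rw [hd, pow_succ]
  have := mul_le_mul_of_nonneg_left hbig (by positivity : 0 ≤ |d (n + 1)| * R ^ n)
  nlinarith

theorem powerSeriesSum_ode_of_recurrence {d : ℕ → ℝ} {b : ℝ}
    (hrec : ∀ n : ℕ, (n + 1) * (n + b) * d (n + 1) = -d n) (t : ℝ) :
    t * powerSeriesSum (derivCoeffs (derivCoeffs d)) t + b * powerSeriesSum (derivCoeffs d) t
      + powerSeriesSum d t = 0 := by
  have hd := entireCoeffs_of_recurrence hrec
  have h₂ : HasSum (fun n => n * derivCoeffs d n * t ^ n)
      (t * powerSeriesSum (derivCoeffs (derivCoeffs d)) t) := by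
    have hshift : (fun n => t * (derivCoeffs (derivCoeffs d) n * t ^ n)) =
        fun n : ℕ => ((n + 1 : ℕ) : ℝ) * derivCoeffs d (n + 1) * t ^ (n + 1) := by
      funext n
      simp only [derivCoeffs]
      push_cast
      ring
    have h := (hd.deriv.deriv.summable t).hasSum.mul_left t
    rw [hshift] at h
    simpa [powerSeriesSum] using
      HasSum.zero_add (f := fun n : ℕ => (n : ℝ) * derivCoeffs d n * t ^ n) h
  have h₁ := ((hd.deriv.summable t).hasSum.mul_left b)
  have h₀ := (hd.summable t).hasSum
  have hsum := (h₂.add h₁).add h₀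
  have hzero : (fun n : ℕ => n * derivCoeffs d n * t ^ n + b * (derivCoeffs d n * t ^ n)
      + d n * t ^ n) = 0 := by
    funext n
    simp only [derivCoeffs, Pi.zero_apply]
    linear_combination t ^ n * hrec n
  rw [hzero] at hsum
  exact hsum.unique hasSum_zero

theorem hasDerivAt_half_rpow_mul_comp {p x g' : ℝ} {g : ℝ → ℝ} (hx : 0 < x)
    (hg : HasDerivAt g g' (x ^ 2 / 4)) :
    HasDerivAt (fun y => (y / 2) ^ p * g (y ^ 2 / 4))
      ((x / 2) ^ (p - 1) * (p / 2 * g (x ^ 2 / 4) + x ^ 2 / 4 * g')) x := by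
  have hw : HasDerivAt (fun y : ℝ => y / 2) (1 / 2) x := by
    simpa using (hasDerivAt_id x).div_const 2
  have hq : HasDerivAt (fun y : ℝ => y ^ 2 / 4) (x / 2) x :=
    ((hasDerivAt_pow 2 x).div_const 4).congr_deriv (by ring)
  have hpow := (Real.hasDerivAt_rpow_const (p := p) (Or.inl (by positivity))).comp x hw
  refine (hpow.mul (hg.comp x hq)).congr_deriv ?_
  simp only [Function.comp_apply]
  rw [Real.rpow_sub_one (by positivity)]
  field_simp
  ring

/-- `t f'' + (ν + 1) f' + f = 0` is the equation of `₀F₁(; ν + 1; -t)`. -/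
theorem bessel_ode_of_half_rpow_mul_comp {ν x : ℝ} {f f' f'' J : ℝ → ℝ}
    (hf : ∀ t, 0 < t → HasDerivAt f (f' t) t) (hf' : ∀ t, 0 < t → HasDerivAt f' (f'' t) t)
    (hode : ∀ t, 0 < t → t * f'' t + (ν + 1) * f' t + f t = 0)
    (hJ : ∀ y, 0 < y → J y = (y / 2) ^ ν * f (y ^ 2 / 4)) (hx : 0 < x) :
    x ^ 2 * deriv (deriv J) x + x * deriv J x + (x ^ 2 - ν ^ 2) * J x = 0 := by
  set h : ℝ → ℝ := fun t => ν / 2 * f t + t * f' t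
  have hh (t : ℝ) (ht : 0 < t) : HasDerivAt h (ν / 2 * f' t + (f' t + t * f'' t)) t := by
    refine ((hf t ht).const_mul _).add (((hasDerivAt_id t).mul (hf' t ht)).congr_deriv ?_)
    simp
  have hJ' (y : ℝ) (hy : 0 < y) : deriv J y = (y / 2) ^ (ν - 1) * h (y ^ 2 / 4) := by
    have hev : J =ᶠ[𝓝 y] fun z => (z / 2) ^ ν * f (z ^ 2 / 4) :=
      eventually_of_mem (Ioi_mem_nhds hy) hJ
    rw [hev.deriv_eq]
    exact (hasDerivAt_half_rpow_mul_comp hy (hf _ (by positivity))).deriv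
  set q := x ^ 2 / 4
  have hJ'' : deriv (deriv J) x = (x / 2) ^ (ν - 1 - 1) *
      ((ν - 1) / 2 * h q + q * (ν / 2 * f' q + (f' q + q * f'' q))) := by
    have hev : deriv J =ᶠ[𝓝 x] fun z => (z / 2) ^ (ν - 1) * h (z ^ 2 / 4) :=
      eventually_of_mem (Ioi_mem_nhds hx) hJ'
    rw [hev.deriv_eq]
    exact (hasDerivAt_half_rpow_mul_comp hx (hh _ (by positivity))).deriv
  have hw : (x / 2) ^ (ν - 1) = (x / 2) ^ (ν - 1 - 1) * (x / 2) := by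
    rw [Real.rpow_sub_one (by positivity) (ν - 1)]
    field_simp
  have hw' : (x / 2) ^ ν = (x / 2) ^ (ν - 1 - 1) * (x / 2) ^ 2 := by
    rw [Real.rpow_sub_one (by positivity) (ν - 1), Real.rpow_sub_one (by positivity) ν]
    field_simp
  rw [hJ'', hJ' x hx, hJ x hx, hw, hw']
  linear_combination (x / 2) ^ (ν - 1 - 1) * x ^ 4 / 4 * hode q (by positivity)

/-- At the poles of `Γ`, `Real.Gamma` is `0`, so this quotient is `0`, the true value of `1 / Γ`
there; hence `besselCoeff_succ` holds for every `ν`. -/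
def besselCoeff (ν : ℝ) (m : ℕ) : ℝ :=
  (-1) ^ m / (m.factorial * Real.Gamma (m + ν + 1))

theorem besselCoeff_succ (ν : ℝ) (m : ℕ) :
    (m + 1) * (m + (ν + 1)) * besselCoeff ν (m + 1) = -besselCoeff ν m := by
  rcases eq_or_ne ((m : ℝ) + ν + 1) 0 with hs | hs
  · simp [besselCoeff, ← add_assoc, hs]
  · have hΓ : Real.Gamma ((m + 1 : ℕ) + ν + 1) = (m + ν + 1) * Real.Gamma (m + ν + 1) := by
      rw [← Real.Gamma_add_one hs]
      push_cast
      ring_nf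
    rw [besselCoeff, besselCoeff, hΓ, Nat.factorial_succ]
    push_cast
    simp only [div_eq_mul_inv, mul_inv]
    field_simp
    ring

theorem tsum_besselCoeff_mul_rpow (ν : ℝ) {x : ℝ} (hx : 0 < x) :
    ∑' m : ℕ, besselCoeff ν m * (x / 2) ^ (2 * (m : ℝ) + ν)
      = (x / 2) ^ ν * powerSeriesSum (besselCoeff ν) (x ^ 2 / 4) := by
  rw [powerSeriesSum, ← tsum_mul_left]
  congr 1 with m
  rw [Real.rpow_add (by positivity), show 2 * (m : ℝ) = ((2 * m : ℕ) : ℝ) by push_cast; ring,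
    Real.rpow_natCast, pow_mul]
  ring

end

/-- The Bessel function of the first kind, defined by its power series,
satisfies Bessel's differential equation
`x² J'' + x J' + (x² − ν²) J = 0` for all `x > 0`. -/
theorem bessel_function_satisfies_bessel_ode
    (ν : ℝ) (J : ℝ → ℝ)
    (hJ : ∀ x : ℝ, J x = ∑' m : ℕ,
      ((-1 : ℝ) ^ m / (m.factorial * Real.Gamma ((m : ℝ) + ν + 1))) *
        (x / 2) ^ (2 * (m : ℝ) + ν)) :
    ∀ x : ℝ, 0 < x →
      x ^ 2 * deriv (deriv J) x + x * deriv J x + (x ^ 2 - ν ^ 2) * J x = 0 := by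
  have hc : EntireCoeffs (besselCoeff ν) := entireCoeffs_of_recurrence (besselCoeff_succ ν)
  intro x hx
  exact bessel_ode_of_half_rpow_mul_comp (fun t _ => hc.hasDerivAt t)
    (fun t _ => hc.deriv.hasDerivAt t)
    (fun t _ => powerSeriesSum_ode_of_recurrence (besselCoeff_succ ν) t)
    (fun y hy => (hJ y).trans (tsum_besselCoeff_mul_rpow ν hy)) hx
end
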